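/- arXiv:2206.05890 — 2 statements merged into one kernel-verified Lean document; each statement's English description precedes it below -/
import Mathlib

section
/- Let q be a real number with q > 0 and q ≠ 1, let k ≥ 1 and x ≥ 1 be natural numbers, and let r_1, …, r_k ≥ 1 be natural numbers with s_k = r_1 + ⋯ + r_k. Then the q-factorial of order s_k satisfies [x]_{s_k, q} = [x−1]_{s_k, q} + Σ_{j=1}^{k} q^{x − m_j} · [r_j]_q · [x−1]_{s_k − 1, q}, where m_j = r_j + ⋯ + r_k. -/
noncomputable def qNum (q : ℝ) (m : ℤ) : ℝ := (1 - q ^ m) / (1 - q)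

noncomputable def qFactorial (q : ℝ) (n : ℕ) : ℝ :=
  ∏ i ∈ Finset.range n, qNum q ((i : ℤ) + 1)

noncomputable def qFacOrd (q : ℝ) (x : ℤ) (r : ℕ) : ℝ :=
  ∏ i ∈ Finset.range r, qNum q (x - (i : ℤ))

noncomputable def qMultinomial (q : ℝ) (x : ℤ) {k : ℕ} (r : Fin k → ℕ) : ℝ :=
  qFacOrd q x (∑ j, r j) / ∏ j, qFactorial q (r j)

/-!
Peeling the factor `[x]_q` off the front of `[x]_{s,q}` and the factor `[x-s]_q` off the back of
`[x-1]_{s,q}` reduces the recurrence to `[x]_q = [x-s]_q + q^(x-s) [s]_q`, while additivity of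
q-numbers, `[a+b]_q = [a]_q + q^a [b]_q`, iterated along `s = r_1 + ⋯ + r_k`, gives
`Σ_j q^(x-m_j) [r_j]_q = q^(x-s) [s]_q`.
-/

open Finset

section QNumber

variable {q : ℝ}

theorem qNum_zero (q : ℝ) : qNum q 0 = 0 := by
  simp [qNum]

theorem qNum_add (hq : q ≠ 0) (a b : ℤ) : qNum q (a + b) = qNum q a + q ^ a * qNum q b := by
  simp only [qNum, mul_div_assoc', ← add_div, zpow_add₀ hq]
  ring

theorem qNum_sum (hq : q ≠ 0) {ι : Type*} [LinearOrder ι] (s : Finset ι) (a : ι → ℤ) :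
    qNum q (∑ i ∈ s, a i) = ∑ j ∈ s, q ^ (∑ i ∈ s with i < j, a i) * qNum q (a j) := by
  induction s using Finset.induction_on_max with
  | empty => simp [qNum_zero]
  | insert m s hlt ih =>
    have hm : m ∉ s := fun h => lt_irrefl m (hlt m h)
    have hfilter_m : {i ∈ insert m s | i < m} = s := by
      ext i
      simp only [mem_filter, mem_insert]
      exact ⟨fun ⟨h, hi⟩ => h.resolve_left hi.ne, fun h => ⟨Or.inr h, hlt i h⟩⟩
    have hfilter_s : ∀ j ∈ s, {i ∈ insert m s | i < j} = {i ∈ s | i < j} := fun j hj => by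
      rw [filter_insert, if_neg (hlt j hj).not_gt]
    rw [sum_insert hm, sum_insert hm, hfilter_m, add_comm (a m), qNum_add hq, ih, add_comm]
    congr 1
    exact sum_congr rfl fun j hj => by rw [hfilter_s j hj]

theorem sum_zpow_sub_tail_mul_qNum (hq : q ≠ 0) {ι : Type*} [LinearOrder ι] (x : ℤ)
    (s : Finset ι) (a : ι → ℤ) :
    ∑ j ∈ s, q ^ (x - ∑ i ∈ s with j ≤ i, a i) * qNum q (a j) =
      q ^ (x - ∑ i ∈ s, a i) * qNum q (∑ i ∈ s, a i) := by
  rw [qNum_sum hq, mul_sum]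
  refine sum_congr rfl fun j _ => ?_
  have hsplit : ∑ i ∈ s, a i = ∑ i ∈ s with j ≤ i, a i + ∑ i ∈ s with i < j, a i := by
    simpa only [not_le] using (sum_filter_add_sum_filter_not s (j ≤ ·) a).symm
  rw [← mul_assoc, ← zpow_add₀ hq, hsplit]
  ring_nf

theorem qFacOrd_zero (q : ℝ) (x : ℤ) : qFacOrd q x 0 = 1 := by
  simp [qFacOrd]

theorem qFacOrd_succ (q : ℝ) (x : ℤ) (n : ℕ) :
    qFacOrd q x (n + 1) = qNum q x * qFacOrd q (x - 1) n := by
  simp only [qFacOrd, prod_range_succ', Nat.cast_zero, sub_zero, Nat.cast_succ, sub_sub,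
    add_comm (1 : ℤ)]
  exact mul_comm _ _

theorem qFacOrd_succ' (q : ℝ) (x : ℤ) (n : ℕ) :
    qFacOrd q x (n + 1) = qFacOrd q x n * qNum q (x - n) :=
  prod_range_succ _ _

theorem qFacOrd_eq_qFacOrd_sub_one_add (hq : q ≠ 0) (x : ℤ) (n : ℕ) :
    qFacOrd q x n = qFacOrd q (x - 1) n + q ^ (x - n) * qNum q n * qFacOrd q (x - 1) (n - 1) := by
  cases n with
  | zero => simp [qFacOrd_zero, qNum_zero]
  | succ t =>
    have hx : x = (x - 1 - t) + ((t + 1 : ℕ) : ℤ) := by push_cast; ring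
    rw [qFacOrd_succ, qFacOrd_succ', Nat.add_sub_cancel]
    conv_lhs => rw [hx, qNum_add hq]
    rw [hx]
    push_cast
    ring_nf

end QNumber

theorem qFacOrd_recurrence_general (q : ℝ) (hq : 0 < q)
    (k x : ℕ) (r : Fin k → ℕ) :
    qFacOrd q (x : ℤ) (∑ i, r i) =
      qFacOrd q ((x : ℤ) - 1) (∑ i, r i) +
      ∑ j : Fin k,
        q ^ ((x : ℤ) - ∑ i ∈ Finset.univ.filter (fun i => j ≤ i), (r i : ℤ)) *
          qNum q (r j) * qFacOrd q ((x : ℤ) - 1) ((∑ i, r i) - 1) := by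
  rw [← sum_mul, sum_zpow_sub_tail_mul_qNum hq.ne', ← Nat.cast_sum]
  exact qFacOrd_eq_qFacOrd_sub_one_add hq.ne' _ _

/-- q-factorial-of-order recursion:
    [x]_{s_k,q} = [x−1]_{s_k,q} + Σ_j q^(x−m_j) [r_j]_q [x−1]_{s_k−1,q}, m_j = r_j + ⋯ + r_k. -/
theorem qFacOrd_recurrence (q : ℝ) (hq : 0 < q) (hq1 : q ≠ 1)
    (k x : ℕ) (hk : 1 ≤ k) (hx : 1 ≤ x) (r : Fin k → ℕ) (hr : ∀ j, 1 ≤ r j) :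
    qFacOrd q (x : ℤ) (∑ i, r i) =
      qFacOrd q ((x : ℤ) - 1) (∑ i, r i) +
      ∑ j : Fin k,
        q ^ ((x : ℤ) - ∑ i ∈ Finset.univ.filter (fun i => j ≤ i), (r i : ℤ)) *
          qNum q (r j) * qFacOrd q ((x : ℤ) - 1) ((∑ i, r i) - 1) :=
  qFacOrd_recurrence_general q hq k x r
end

section
/- Let q be a real number with 0 < q < 1, let k ≥ 1 and n be natural numbers, and let θ_1, …, θ_k be positive real numbers. Then the q-multinomial distribution of the first kind with parameters n, (θ_1,…,θ_k), q is a probability distribution: Σ C_q(n; y_1,…,y_k) · ∏_{j=1}^{k} [ θ_j^{y_j} · q^{y_j(y_j−1)/2} / ∏_{i=1}^{n − s_{j−1}} (1 + θ_j q^{i−1}) ] = 1, where the sum is over all tuples (y_1,…,y_k) of natural numbers with y_1 + ⋯ + y_k ≤ n, and s_j = y_1 + ⋯ + y_j with s_0 = 0. -/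
open Finset

lemma qNum_natCast_add (q : ℝ) (m l : ℕ) :
    qNum q ((m + l : ℕ) : ℤ) = qNum q m + q ^ m * qNum q l := by
  simp only [qNum, zpow_natCast, pow_add]
  ring

lemma qNum_natCast_ne_zero {q : ℝ} (hq0 : 0 < q) (hq1 : q ≠ 1) {m : ℕ} (hm : m ≠ 0) :
    qNum q m ≠ 0 := by
  rw [qNum, zpow_natCast]
  refine div_ne_zero (sub_ne_zero.2 ?_) (sub_ne_zero.2 hq1.symm)
  exact Ne.symm ((pow_eq_one_iff_of_nonneg hq0.le hm).not.2 hq1)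

lemma qFactorial_ne_zero {q : ℝ} (hq0 : 0 < q) (hq1 : q ≠ 1) (n : ℕ) : qFactorial q n ≠ 0 :=
  prod_ne_zero_iff.2 fun i _ => by
    exact_mod_cast qNum_natCast_ne_zero hq0 hq1 (Nat.succ_ne_zero i)

lemma qFacOrd_add (q : ℝ) (x : ℤ) (a s : ℕ) :
    qFacOrd q x (a + s) = qFacOrd q x a * qFacOrd q (x - a) s := by
  simp only [qFacOrd, prod_range_add, Nat.cast_add, sub_add_eq_sub_sub]

lemma qFacOrd_succ_right (q : ℝ) (x : ℤ) (a : ℕ) :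
    qFacOrd q x (a + 1) = qFacOrd q x a * qNum q (x - a) :=
  prod_range_succ _ _

lemma qFacOrd_succ_left (q : ℝ) (x : ℤ) (a : ℕ) :
    qFacOrd q (x + 1) (a + 1) = qNum q (x + 1) * qFacOrd q x a := by
  simp only [qFacOrd, prod_range_succ', Nat.cast_add, Nat.cast_one, Nat.cast_zero, sub_zero,
    add_sub_add_right_eq_sub, mul_comm]

lemma qFacOrd_eq_zero_of_lt (q : ℝ) {n a : ℕ} (h : n < a) : qFacOrd q n a = 0 :=
  prod_eq_zero (mem_range.2 h) (by simp [qNum])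

lemma qFactorial_succ (q : ℝ) (a : ℕ) :
    qFactorial q (a + 1) = qFactorial q a * qNum q (a + 1) :=
  prod_range_succ _ _

noncomputable def qBinomial (q : ℝ) (x : ℤ) (a : ℕ) : ℝ := qFacOrd q x a / qFactorial q a

@[simp]
lemma qBinomial_zero_right (q : ℝ) (x : ℤ) : qBinomial q x 0 = 1 := by
  simp [qBinomial, qFacOrd, qFactorial]

lemma qBinomial_eq_zero_of_lt (q : ℝ) {n a : ℕ} (h : n < a) : qBinomial q n a = 0 := by
  rw [qBinomial, qFacOrd_eq_zero_of_lt q h, zero_div]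

lemma qBinomial_succ_succ {q : ℝ} (hq0 : 0 < q) (hq1 : q ≠ 1) {n a : ℕ} (h : a ≤ n) :
    qBinomial q (n + 1) (a + 1) = qBinomial q n (a + 1) + q ^ (n - a) * qBinomial q n a := by
  have hsplit : qNum q (n + 1) = qNum q (n - a) + q ^ (n - a) * qNum q (a + 1) := by
    have := qNum_natCast_add q (n - a) (a + 1)
    rwa [show n - a + (a + 1) = n + 1 by omega, Nat.cast_sub h, Nat.cast_succ,
      Nat.cast_succ] at this
  have hN := qNum_natCast_ne_zero hq0 hq1 (Nat.succ_ne_zero a)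
  have hF := qFactorial_ne_zero hq0 hq1 a
  push_cast at hN
  rw [qBinomial, qBinomial, qBinomial, qFacOrd_succ_left, qFacOrd_succ_right, qFactorial_succ,
    hsplit]
  field_simp

theorem prod_one_add_mul_pow_eq_sum_qBinomial {q : ℝ} (hq0 : 0 < q) (hq1 : q ≠ 1) (t : ℝ)
    (n : ℕ) : ∏ i ∈ range n, (1 + t * q ^ i) =
      ∑ a ∈ range (n + 1), qBinomial q n a * q ^ (a * (a - 1) / 2) * t ^ a := by
  induction n with
  | zero => simp
  | succ n ih =>
    set f : ℕ → ℝ := fun a => qBinomial q n a * q ^ (a * (a - 1) / 2) * t ^ a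
    have hf0 : f 0 = 1 := by simp [f]
    have hftop : f (n + 1) = 0 := by simp [f, qBinomial_eq_zero_of_lt q (Nat.lt_succ_self n)]
    have hshift : ∑ a ∈ range (n + 1), f (a + 1) = ∑ a ∈ range (n + 1), f a - 1 := by
      linarith [sum_range_succ' f (n + 1), sum_range_succ f (n + 1)]
    have hstep : ∀ a ∈ range (n + 1),
        qBinomial q (n + 1 : ℕ) (a + 1) * q ^ ((a + 1) * (a + 1 - 1) / 2) * t ^ (a + 1) =
          f (a + 1) + f a * (t * q ^ n) := by
      intro a ha
      have hpow : q ^ (n - a) * q ^ a = q ^ n := by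
        rw [← pow_add, Nat.sub_add_cancel (Nat.lt_succ_iff.1 (mem_range.1 ha))]
      rw [Nat.cast_succ, qBinomial_succ_succ hq0 hq1 (Nat.lt_succ_iff.1 (mem_range.1 ha)),
        ← hpow]
      simp only [f, Nat.triangle_succ]
      ring
    rw [prod_range_succ, ih]
    conv_rhs => rw [sum_range_succ', sum_congr rfl hstep, sum_add_distrib, ← sum_mul, hshift]
    simp only [Nat.cast_add, Nat.cast_one, qBinomial_zero_right, Nat.zero_mul, Nat.zero_div,
      pow_zero, mul_one]
    ring

lemma qMultinomial_eq_zero_of_lt (q : ℝ) {n k : ℕ} {y : Fin k → ℕ} (h : n < ∑ j, y j) :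
    qMultinomial q n y = 0 := by
  rw [qMultinomial, qFacOrd_eq_zero_of_lt q h, zero_div]

lemma qMultinomial_cons (q : ℝ) (x : ℤ) {k : ℕ} (a : ℕ) (y : Fin k → ℕ) :
    qMultinomial q x (Fin.cons a y) = qBinomial q x a * qMultinomial q (x - a) y := by
  rw [qMultinomial, qMultinomial, qBinomial, Fin.sum_cons, qFacOrd_add, Fin.prod_univ_succ,
    div_mul_div_comm]
  simp only [Fin.cons_zero, Fin.cons_succ]

lemma Fin.sum_filter_lt_succ_cons {M : Type*} [AddCommMonoid M] {k : ℕ} (a : M) (y : Fin k → M)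
    (j : Fin k) :
    ∑ i ∈ univ.filter (· < j.succ), (Fin.cons a y : Fin (k + 1) → M) i =
      a + ∑ i ∈ univ.filter (· < j), y i := by
  simp [sum_filter, Fin.sum_univ_succ, Fin.succ_lt_succ_iff, Fin.succ_pos]

noncomputable def qMultinomialFirstKindMass (q : ℝ) (n : ℕ) {k : ℕ} (θ : Fin k → ℝ)
    (y : Fin k → ℕ) : ℝ :=
  qMultinomial q (n : ℤ) y *
    ∏ j : Fin k, θ j ^ y j * q ^ (y j * (y j - 1) / 2) /
      ∏ i ∈ range (n - ∑ i' ∈ univ.filter (fun i' => i' < j), y i'), (1 + θ j * q ^ i)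

lemma qMultinomialFirstKindMass_eq_zero_of_lt (q : ℝ) {n k : ℕ} (θ : Fin k → ℝ)
    {y : Fin k → ℕ} (h : n < ∑ j, y j) : qMultinomialFirstKindMass q n θ y = 0 := by
  rw [qMultinomialFirstKindMass, qMultinomial_eq_zero_of_lt q h, zero_mul]

lemma qMultinomialFirstKindMass_cons (q : ℝ) {n k a : ℕ} (h : a ≤ n) (θ : Fin (k + 1) → ℝ)
    (y : Fin k → ℕ) :
    qMultinomialFirstKindMass q n θ (Fin.cons a y) =
      qBinomial q n a * (θ 0 ^ a * q ^ (a * (a - 1) / 2) / ∏ i ∈ range n, (1 + θ 0 * q ^ i)) *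
        qMultinomialFirstKindMass q (n - a) (Fin.tail θ) y := by
  simp only [qMultinomialFirstKindMass, qMultinomial_cons, Fin.prod_univ_succ,
    Fin.sum_filter_lt_succ_cons, Fin.cons_zero, Fin.cons_succ, Fin.not_lt_zero, filter_false,
    sum_empty, Nat.sub_zero, Nat.sub_add_eq, Nat.cast_sub h, Fin.tail]
  ring

/-- Summing over the box `{0, …, m}^k` for any `m ≥ n` keeps the index set fixed when the induction
passes from `n` to `n - a`; tuples with `∑ y > n` carry mass `0`. -/
theorem sum_qMultinomialFirstKindMass {q : ℝ} (hq0 : 0 < q) (hq1 : q ≠ 1) {k m n : ℕ}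
    (hnm : n ≤ m) (θ : Fin k → ℝ) (hθ : ∀ j, 0 ≤ θ j) :
    ∑ y : Fin k → Fin (m + 1), qMultinomialFirstKindMass q n θ (fun j => (y j : ℕ)) = 1 := by
  induction k generalizing n with
  | zero => simp [qMultinomialFirstKindMass, qMultinomial, qFacOrd, qFactorial]
  | succ k ih =>
    set P := ∏ i ∈ range n, (1 + θ 0 * q ^ i)
    have hP : P ≠ 0 := (prod_pos fun i _ => by have := hθ 0; positivity).ne'
    set c : ℕ → ℝ := fun a => qBinomial q n a * q ^ (a * (a - 1) / 2) * θ 0 ^ a / P with hc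
    have hfiber (a : Fin (m + 1)) : ∑ y : Fin k → Fin (m + 1),
        qMultinomialFirstKindMass q n θ (Fin.cons (a : ℕ) fun j => (y j : ℕ)) = c a := by
      rcases le_or_gt (a : ℕ) n with ha | ha
      · simp_rw [qMultinomialFirstKindMass_cons q ha, ← mul_sum]
        rw [ih (n := n - a) (by omega) (Fin.tail θ) fun j => hθ _, mul_one, hc]
        ring
      · rw [sum_eq_zero fun y _ => qMultinomialFirstKindMass_eq_zero_of_lt q θ
          (by rw [Fin.sum_cons]; omega)]
        simp only [hc, qBinomial_eq_zero_of_lt q ha, zero_mul, zero_div]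
    calc ∑ y : Fin (k + 1) → Fin (m + 1), qMultinomialFirstKindMass q n θ (fun j => (y j : ℕ))
        = ∑ a : Fin (m + 1), ∑ y : Fin k → Fin (m + 1),
            qMultinomialFirstKindMass q n θ (Fin.cons (a : ℕ) fun j => (y j : ℕ)) := by
          rw [← (Fin.consEquiv fun _ => Fin (m + 1)).sum_comp, Fintype.sum_prod_type]
          exact Fintype.sum_congr _ _ fun a => Fintype.sum_congr _ _ fun y =>
            congrArg _ (Fin.comp_cons Fin.val a y)
      _ = ∑ a ∈ range (n + 1), c a := by
          rw [Fintype.sum_congr _ _ hfiber, Fin.sum_univ_eq_sum_range c]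
          refine (sum_subset (range_subset_range.2 (by omega)) fun a _ ha => ?_).symm
          simp [c, qBinomial_eq_zero_of_lt q (not_lt.1 (mem_range.not.1 ha))]
      _ = 1 := by
          rw [← sum_div, ← prod_one_add_mul_pow_eq_sum_qBinomial hq0 hq1, div_self hP]

theorem qMultinomial_dist_first_kind_general (q : ℝ) (hq0 : 0 < q) (hq1 : q < 1)
    (k n : ℕ) (θ : Fin k → ℝ) (hθ : ∀ j, 0 < θ j) :
    ∑ y ∈ Finset.univ.filter (fun y : Fin k → Fin (n + 1) => ∑ j, (y j : ℕ) ≤ n),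
      qMultinomial q (n : ℤ) (fun j => (y j : ℕ)) *
        ∏ j : Fin k,
          θ j ^ (y j : ℕ) * q ^ ((y j : ℕ) * ((y j : ℕ) - 1) / 2) /
            ∏ i ∈ Finset.range
                (n - ∑ i' ∈ Finset.univ.filter (fun i' => i' < j), (y i' : ℕ)),
              (1 + θ j * q ^ i) = 1 := by
  change ∑ y ∈ univ.filter (fun y : Fin k → Fin (n + 1) => ∑ j, (y j : ℕ) ≤ n),
    qMultinomialFirstKindMass q n θ (fun j => (y j : ℕ)) = 1
  rw [sum_filter_of_ne fun y _ hy => not_lt.1 fun hn =>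
    hy (qMultinomialFirstKindMass_eq_zero_of_lt q θ hn)]
  exact sum_qMultinomialFirstKindMass hq0 hq1.ne le_rfl θ fun j => (hθ j).le

/-- The q-multinomial distribution of the first kind is a probability distribution:
    Σ_{y, Σy_j ≤ n} C_q(n; y) ∏_j θ_j^(y_j) q^(y_j(y_j−1)/2) / ∏_{i=1}^{n−s_{j−1}} (1 + θ_j q^(i−1)) = 1. -/
theorem qMultinomial_dist_first_kind (q : ℝ) (hq0 : 0 < q) (hq1 : q < 1)
    (k n : ℕ) (hk : 1 ≤ k) (θ : Fin k → ℝ) (hθ : ∀ j, 0 < θ j) :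
    ∑ y ∈ Finset.univ.filter (fun y : Fin k → Fin (n + 1) => ∑ j, (y j : ℕ) ≤ n),
      qMultinomial q (n : ℤ) (fun j => (y j : ℕ)) *
        ∏ j : Fin k,
          θ j ^ (y j : ℕ) * q ^ ((y j : ℕ) * ((y j : ℕ) - 1) / 2) /
            ∏ i ∈ Finset.range
                (n - ∑ i' ∈ Finset.univ.filter (fun i' => i' < j), (y i' : ℕ)),
              (1 + θ j * q ^ i) = 1 :=
  qMultinomial_dist_first_kind_general q hq0 hq1 k n θ hθ
end
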